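/- If f : ℝ² → ℝ is strictly convex and a, (b_n) ∈ ℝ² satisfy (1/2)f(a) + (1/2)f(b_n) − f((a+b_n)/2) → 0, and (b_n) is bounded, then b_n → a. -/

import Mathlib

/-!
A strictly convex function on a finite-dimensional space is continuous, so every cluster point
`c` of the bounded sequence `(b n)` has midpoint defect `0` with `a`; strict convexity makes
that defect positive unless `c = a`. A bounded sequence whose only cluster point is `a`
converges to `a`.
-/

open Filter

local notation "E2" => EuclideanSpace ℝ (Fin 2)

open Topology

theorem tendsto_of_isBounded_range_of_tendsto_comp {X Y : Type*} [PseudoMetricSpace X]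
    [ProperSpace X] [TopologicalSpace Y] [T2Space Y] {g : X → Y} (hg : Continuous g)
    {a : X} {y : Y} (hfiber : ∀ x, g x = y → x = a) {b : ℕ → X}
    (hb : Bornology.IsBounded (Set.range b)) (hgb : Tendsto (g ∘ b) atTop (𝓝 y)) :
    Tendsto b atTop (𝓝 a) := by
  refine tendsto_of_subseq_tendsto fun ns hns => ?_
  obtain ⟨c, -, φ, hφ, hc⟩ :=
    tendsto_subseq_of_bounded hb (x := b ∘ ns) fun n => Set.mem_range_self _
  have hgc : g c = y :=
    tendsto_nhds_unique ((hg.tendsto c).comp hc) (hgb.comp (hns.comp hφ.tendsto_atTop))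
  exact ⟨φ, hfiber c hgc ▸ hc⟩

theorem StrictConvexOn.apply_midpoint_lt {E : Type*} [AddCommGroup E] [Module ℝ E]
    {f : E → ℝ} (hf : StrictConvexOn ℝ Set.univ f) {x y : E} (hxy : x ≠ y) :
    f ((2:ℝ)⁻¹ • (x + y)) < (1/2) * f x + (1/2) * f y := by
  have h := hf.2 (Set.mem_univ x) (Set.mem_univ y) hxy (by norm_num : (0:ℝ) < 1/2)
    (by norm_num : (0:ℝ) < 1/2) (by norm_num)
  rw [smul_eq_mul, smul_eq_mul, ← smul_add] at h
  simpa only [one_div] using h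

theorem StrictConvexOn.tendsto_of_midpoint_defect_tendsto_zero {E : Type*}
    [NormedAddCommGroup E] [NormedSpace ℝ E] [FiniteDimensional ℝ E] {f : E → ℝ}
    (hf : StrictConvexOn ℝ Set.univ f) (a : E) {b : ℕ → E}
    (hb : Bornology.IsBounded (Set.range b))
    (hdefect : Tendsto (fun n => (1/2) * f a + (1/2) * f (b n) - f ((2:ℝ)⁻¹ • (a + b n)))
      atTop (𝓝 0)) :
    Tendsto b atTop (𝓝 a) := by
  have hfc : Continuous f :=
    continuousOn_univ.1 (hf.convexOn.continuousOn isOpen_univ)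
  refine tendsto_of_isBounded_range_of_tendsto_comp
    (g := fun c => (1/2) * f a + (1/2) * f c - f ((2:ℝ)⁻¹ • (a + c))) (by fun_prop)
    (fun c hc => ?_) hb hdefect
  by_contra hca
  have := hf.apply_midpoint_lt (Ne.symm hca)
  linarith

/-- If `f : ℝ² → ℝ` is strictly convex, `(b_n)` is bounded, and the convexity defects
`(1/2) f(a) + (1/2) f(b_n) − f((a+b_n)/2)` tend to `0`, then `b_n → a`. -/
theorem tendsto_of_strictConvex_defect
    (f : E2 → ℝ) (hf : StrictConvexOn ℝ Set.univ f)
    (a : E2) (b : ℕ → E2) (M : ℝ) (hb : ∀ n, ‖b n‖ ≤ M)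
    (hdefect : Tendsto
      (fun n => (1/2) * f a + (1/2) * f (b n) - f ((2:ℝ)⁻¹ • (a + b n)))
      atTop (nhds 0)) :
    Tendsto b atTop (nhds a) :=
  hf.tendsto_of_midpoint_defect_tendsto_zero a
    (isBounded_iff_forall_norm_le.2 ⟨M, Set.forall_mem_range.2 hb⟩) hdefect
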